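/- arXiv:math/0009102 — 2 statements merged into one kernel-verified Lean document; each statement's English description precedes it below -/
import Mathlib

section
/- (First partial derivative of the entropy) Let n ≥ 1 and p = (p_1,…,p_n) with 0 < p_i < 1 for all i. Then for each l ∈ [n], the partial derivative of H(Z_p) with respect to p_l equals ∑_{k=0}^n (b(k, p_l̂) − b(k−1, p_l̂)) · log₂ b(k,p). -/
open Finset

/-- `b(k, S, p)`: the Poisson–binomial probability mass function built from the
parameters `p i`, `i ∈ S`, defined for all integers `k`. -/
noncomputable def pbinOn (n : ℕ) (S : Finset (Fin n)) (p : Fin n → ℝ) (k : ℤ) : ℝ :=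
  ∑ A ∈ S.powerset.filter (fun A : Finset (Fin n) => (A.card : ℤ) = k),
    (∏ i ∈ A, p i) * ∏ j ∈ S \ A, (1 - p j)

/-- Shannon entropy (base 2) of the Poisson–binomial distribution. -/
noncomputable def pbinEnt (n : ℕ) (p : Fin n → ℝ) : ℝ :=
  -∑ k ∈ Finset.range (n + 1),
    pbinOn n Finset.univ p k * Real.logb 2 (pbinOn n Finset.univ p k)

/-!
Conditioning on the `l`-th trial, `b(k, p) = p_l b(k-1, p_l̂) + (1 - p_l) b(k, p_l̂)` is affine in
`p_l` with slope `b(k-1, p_l̂) - b(k, p_l̂)`. Differentiating `-∑ b_k log₂ b_k` termwise gives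
`-∑ b_k' (log₂ b_k + 1 / ln 2)`, and the second part vanishes because the slopes telescope to
`b(-1, p_l̂) - b(n, p_l̂) = 0`.
-/

open Function

theorem HasDerivAt.mul_logb {b x f' : ℝ} {f : ℝ → ℝ} (hf : HasDerivAt f f' x) (hx : f x ≠ 0) :
    HasDerivAt (fun y => f y * Real.logb b (f y))
      (f' * (Real.logb b (f x) + 1 / Real.log b)) x := by
  have h := ((Real.hasDerivAt_mul_log hx).comp x hf).div_const (Real.log b)
  have hfun : (fun y => f y * Real.logb b (f y)) =
      fun y => f y * Real.log (f y) / Real.log b := by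
    funext y
    rw [Real.logb, mul_div_assoc]
  rw [hfun]
  exact h.congr_deriv (by rw [Real.logb]; ring)

theorem hasDerivAt_neg_sum_mul_logb {ι : Type*} (s : Finset ι) {b x : ℝ} {F : ι → ℝ → ℝ}
    {F' : ι → ℝ} (hF : ∀ k ∈ s, HasDerivAt (F k) (F' k) x) (hF₀ : ∀ k ∈ s, F k x ≠ 0)
    (hF' : ∑ k ∈ s, F' k = 0) :
    HasDerivAt (fun y => -∑ k ∈ s, F k y * Real.logb b (F k y))
      (-∑ k ∈ s, F' k * Real.logb b (F k x)) x := by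
  refine (HasDerivAt.fun_sum fun k hk => (hF k hk).mul_logb (b := b) (hF₀ k hk)).fun_neg
    |>.congr_deriv ?_
  simp only [mul_add, sum_add_distrib, ← sum_mul, hF', zero_mul, add_zero]

section pbinOn

variable {n : ℕ} {S : Finset (Fin n)} {p : Fin n → ℝ} {k : ℤ}

theorem pbinOn_congr {q : Fin n → ℝ} (h : ∀ i ∈ S, p i = q i) :
    pbinOn n S p k = pbinOn n S q k := by
  unfold pbinOn
  refine sum_congr rfl fun A hA => ?_
  have hAS : A ⊆ S := mem_powerset.mp (mem_filter.mp hA).1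
  rw [prod_congr rfl fun i hi => h i (hAS hi),
    prod_congr rfl fun j hj => congrArg (1 - ·) (h j (mem_sdiff.mp hj).1)]

theorem pbinOn_eq_zero_of_neg (hk : k < 0) : pbinOn n S p k = 0 := by
  refine sum_eq_zero fun A hA => absurd (mem_filter.mp hA).2 ?_
  omega

theorem pbinOn_eq_zero_of_card_lt (hk : (S.card : ℤ) < k) : pbinOn n S p k = 0 := by
  refine sum_eq_zero fun A hA => absurd (mem_filter.mp hA).2 ?_
  have := card_le_card (mem_powerset.mp (mem_filter.mp hA).1)
  omega

theorem pbinOn_pos (hp : ∀ i ∈ S, 0 < p i ∧ p i < 1) {k : ℕ} (hk : k ≤ S.card) :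
    0 < pbinOn n S p k := by
  obtain ⟨A, hAS, hA⟩ := exists_subset_card_eq hk
  refine sum_pos' (fun B hB => ?_) ⟨A, by simp [hAS, hA], ?_⟩
  · have hBS := mem_powerset.mp (mem_filter.mp hB).1
    exact mul_nonneg (prod_nonneg fun i hi => (hp i (hBS hi)).1.le)
      (prod_nonneg fun j hj => sub_nonneg.mpr (hp j (mem_sdiff.mp hj).1).2.le)
  · exact mul_pos (prod_pos fun i hi => (hp i (hAS hi)).1)
      (prod_pos fun j hj => sub_pos.mpr (hp j (mem_sdiff.mp hj).1).2)

theorem pbinOn_insert {l : Fin n} (hl : l ∉ S) (k : ℤ) :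
    pbinOn n (insert l S) p k = p l * pbinOn n S p (k - 1) + (1 - p l) * pbinOn n S p k := by
  simp only [pbinOn, sum_filter, sum_powerset_insert hl, mul_sum]
  rw [add_comm]
  congr 1 <;> refine sum_congr rfl fun A hA => ?_
  · have hlA : l ∉ A := fun h => hl (mem_powerset.mp hA h)
    rw [card_insert_of_notMem hlA, prod_insert hlA, insert_sdiff_insert,
      sdiff_insert_of_notMem hl]
    simp only [Nat.cast_add, Nat.cast_one, ← eq_sub_iff_add_eq, mul_ite, mul_zero, mul_assoc]
  · have hlA : l ∉ S \ A := fun h => hl (mem_sdiff.mp h).1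
    rw [insert_sdiff_of_notMem _ fun h => hl (mem_powerset.mp hA h), prod_insert hlA]
    simp only [mul_ite, mul_zero, mul_left_comm]

theorem hasDerivAt_pbinOn_update {l : Fin n} (hl : l ∈ S) (k : ℤ) (y : ℝ) :
    HasDerivAt (fun x => pbinOn n S (update p l x) k)
      (pbinOn n (S.erase l) p (k - 1) - pbinOn n (S.erase l) p k) y := by
  have hS : ∀ x, pbinOn n S (update p l x) k = pbinOn n (S.erase l) p k +
      x * (pbinOn n (S.erase l) p (k - 1) - pbinOn n (S.erase l) p k) := fun x => by
    have hp : ∀ i ∈ S.erase l, update p l x i = p i := fun i hi =>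
      update_of_ne (ne_of_mem_erase hi) _ _
    rw [← insert_erase hl, pbinOn_insert (notMem_erase l S), update_self,
      erase_insert (notMem_erase l S), pbinOn_congr hp, pbinOn_congr (k := k) hp]
    ring
  simp only [hS]
  exact (hasDerivAt_mul_const _).const_add _

theorem sum_range_pbinOn_sub_one_sub_eq_zero {m : ℕ} (hm : S.card < m) :
    ∑ k ∈ range (m + 1), (pbinOn n S p (k - 1) - pbinOn n S p k) = 0 := by
  have h := sum_range_sub' (fun i : ℕ => pbinOn n S p ((i : ℤ) - 1)) (m + 1)
  push_cast at h
  simp only [add_sub_cancel_right] at h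
  rw [h, pbinOn_eq_zero_of_neg (by norm_num), pbinOn_eq_zero_of_card_lt (by omega), sub_zero]

end pbinOn

theorem hasDerivAt_pbinEnt_general (n : ℕ) (p : Fin n → ℝ)
    (hp : ∀ i, 0 < p i ∧ p i < 1) (l : Fin n) :
    HasDerivAt (fun x : ℝ => pbinEnt n (Function.update p l x))
      (∑ k ∈ Finset.range (n + 1),
        (pbinOn n (Finset.univ.erase l) p k - pbinOn n (Finset.univ.erase l) p ((k : ℤ) - 1)) *
          Real.logb 2 (pbinOn n Finset.univ p k))
      (p l) := by
  have hl : l ∈ (univ : Finset (Fin n)) := mem_univ l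
  have hcard : (univ.erase l).card < n := by
    simpa using card_erase_lt_of_mem hl
  have h := hasDerivAt_neg_sum_mul_logb (range (n + 1)) (b := 2)
    (fun k _ => hasDerivAt_pbinOn_update (p := p) hl k (p l))
    (fun k hk => by
      rw [update_eq_self]
      exact (pbinOn_pos (fun i _ => hp i) (by simpa using mem_range_succ_iff.mp hk)).ne')
    (sum_range_pbinOn_sub_one_sub_eq_zero hcard)
  unfold pbinEnt
  refine h.congr_deriv ?_
  simp only [update_eq_self, ← sum_neg_distrib, ← neg_mul, neg_sub]

/-- First partial derivative of the entropy:
`∂H(Z_p)/∂p_l = ∑_{k=0}^n (b(k, p_l̂) − b(k−1, p_l̂)) · log₂ b(k,p)`. -/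
theorem hasDerivAt_pbinEnt (n : ℕ) (hn : 1 ≤ n) (p : Fin n → ℝ)
    (hp : ∀ i, 0 < p i ∧ p i < 1) (l : Fin n) :
    HasDerivAt (fun x : ℝ => pbinEnt n (Function.update p l x))
      (∑ k ∈ Finset.range (n + 1),
        (pbinOn n (Finset.univ.erase l) p k - pbinOn n (Finset.univ.erase l) p ((k : ℤ) - 1)) *
          Real.logb 2 (pbinOn n Finset.univ p k))
      (p l) :=
  hasDerivAt_pbinEnt_general n p hp l
end

section
/- (Strict negativity of the second directional derivative) Let n ≥ 2, let p = (p_1,…,p_n) with 0 < p_i < 1 for all i, let l ≠ m in [n], and let D_u = ∂/∂p_l − ∂/∂p_m. Then D²_u H(Z_p) < 0. -/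
open Finset

/-- The partial derivative with respect to the `l`-th coordinate. -/
noncomputable def pderiv (n : ℕ) (l : Fin n) (f : (Fin n → ℝ) → ℝ) (p : Fin n → ℝ) : ℝ :=
  deriv (fun x : ℝ => f (Function.update p l x)) (p l)

/-- The directional derivative operator `D_u = ∂/∂p_l − ∂/∂p_m`. -/
noncomputable def Du (n : ℕ) (l m : Fin n) (f : (Fin n → ℝ) → ℝ) (p : Fin n → ℝ) : ℝ :=
  pderiv n l f p - pderiv n m f p

/-!
Freeze every coordinate except `x = p l` and `y = p m`. Each `b k` is then a symmetric bilinear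
function of `(x, y)`: `b k = c k + (c (k-1) - c k) (x + y) + Δ²c k · x y`, where `c` is the
distribution of the remaining `n - 2` variables and `Δ²c k = c (k-2) - 2 c (k-1) + c k`. With
`φ t = -t log₂ t` this gives
`D²_u H = ∑ φ''(b k) (D_u b k)² - 2 ∑ Δ²c k · φ'(b k)`.
The first sum is `≤ 0` because `φ` is concave. Summation by parts turns the second into
`∑ j, c j · Δ²(φ' ∘ b) (j+2)`, where `c j > 0` for `0 ≤ j ≤ n - 2` and `Δ²(φ' ∘ b) > 0` because
the Poisson–binomial distribution is strictly log-concave: adding one more Bernoulli variable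
preserves strict log-concavity.
-/

open Function Topology

def secondDiff (c : ℤ → ℝ) (k : ℤ) : ℝ := c (k - 2) - 2 * c (k - 1) + c k

theorem sum_range_secondDiff_mul {c : ℤ → ℝ} {N : ℕ} (hc : ∀ j, j < 0 ∨ (N : ℤ) < j → c j = 0)
    (f : ℤ → ℝ) :
    ∑ k ∈ range (N + 3), secondDiff c k * f k
      = ∑ j ∈ range (N + 1), c j * secondDiff f (j + 2) := by
  have h2 : ∑ k ∈ range (N + 3), c (k - 2) * f k = ∑ j ∈ range (N + 1), c j * f (j + 2) := by
    rw [sum_range_succ', sum_range_succ']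
    simp [hc (-2), hc (-1), add_assoc, one_add_one_eq_two]
  have h1 : ∑ k ∈ range (N + 3), c (k - 1) * f k = ∑ j ∈ range (N + 1), c j * f (j + 1) := by
    rw [sum_range_succ', sum_range_succ]
    simp [hc (-1), hc (N + 1)]
  have h0 : ∑ k ∈ range (N + 3), c k * f k = ∑ j ∈ range (N + 1), c j * f j := by
    rw [sum_range_succ, sum_range_succ]
    simp [hc (N + 1), hc (N + 2)]
  calc ∑ k ∈ range (N + 3), secondDiff c k * f k
      = ∑ k ∈ range (N + 3), c (k - 2) * f k - 2 * ∑ k ∈ range (N + 3), c (k - 1) * f k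
        + ∑ k ∈ range (N + 3), c k * f k := by
        simp only [secondDiff, mul_sum, ← sum_sub_distrib, ← sum_add_distrib]
        exact sum_congr rfl fun k _ => by ring
    _ = ∑ j ∈ range (N + 1), c j * secondDiff f (j + 2) := by
        simp only [h2, h1, h0, secondDiff, mul_sum, ← sum_sub_distrib, ← sum_add_distrib]
        exact sum_congr rfl fun j _ => by ring_nf

theorem sum_range_secondDiff_mul_pos {c f : ℤ → ℝ} {N : ℕ}
    (hc : ∀ j, j < 0 ∨ (N : ℤ) < j → c j = 0) (hc_pos : ∀ j : ℕ, j ≤ N → 0 < c j)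
    (hf : ∀ j : ℕ, j ≤ N → 0 < secondDiff f (j + 2)) :
    0 < ∑ k ∈ range (N + 3), secondDiff c k * f k := by
  rw [sum_range_secondDiff_mul hc]
  refine sum_pos (fun j hj => ?_) ⟨0, by simp⟩
  have hjN := Nat.le_of_lt_succ (mem_range.1 hj)
  exact mul_pos (hc_pos j hjN) (hf j hjN)

theorem mix_mul_lt_sq {c : ℤ → ℝ} {a : ℝ} (ha : a ∈ Set.Ioo 0 1) (hc : ∀ j, 0 ≤ c j)
    (hlc : ∀ j, c j * c (j + 2) ≤ c (j + 1) ^ 2) {k : ℤ} (hk : 0 < c k) (hk1 : 0 < c (k + 1))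
    (hstrict : c (k - 1) * c (k + 1) < c k ^ 2) :
    (a * c (k - 1) + (1 - a) * c k) * (a * c (k + 1) + (1 - a) * c (k + 2))
      < (a * c k + (1 - a) * c (k + 1)) ^ 2 := by
  obtain ⟨ha0, ha1⟩ := ha
  have hmid : c (k - 1) * c (k + 2) ≤ c k * c (k + 1) := by
    have := mul_le_mul hstrict.le (hlc k) (mul_nonneg hk.le (hc _)) (sq_nonneg _)
    nlinarith [mul_pos hk hk1]
  nlinarith [mul_pos (mul_pos ha0 ha0) (sub_pos.2 hstrict),
    mul_nonneg (mul_nonneg ha0.le (sub_pos.2 ha1).le) (sub_nonneg.2 hmid),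
    mul_nonneg (mul_nonneg (sub_pos.2 ha1).le (sub_pos.2 ha1).le) (sub_nonneg.2 (hlc k))]

namespace PoissonBinomial

variable {n : ℕ} {S : Finset (Fin n)} {p q : Fin n → ℝ}

theorem pbinOn_congr (h : ∀ i ∈ S, p i = q i) (k : ℤ) : pbinOn n S p k = pbinOn n S q k := by
  refine sum_congr rfl fun A hA => ?_
  have hAS := mem_powerset.1 (mem_filter.1 hA).1
  rw [prod_congr rfl fun i hi => h i (hAS hi),
    prod_congr rfl fun j hj => congrArg (1 - ·) (h j (mem_sdiff.1 hj).1)]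

theorem pbinOn_eq_zero (p : Fin n → ℝ) {k : ℤ} (hk : k < 0 ∨ (S.card : ℤ) < k) :
    pbinOn n S p k = 0 := by
  refine sum_eq_zero fun A hA => absurd (mem_filter.1 hA).2 ?_
  have := card_le_card (mem_powerset.1 (mem_filter.1 hA).1)
  omega

theorem pbinOn_nonneg (hp : ∀ i ∈ S, p i ∈ Set.Icc 0 1) (k : ℤ) : 0 ≤ pbinOn n S p k := by
  refine sum_nonneg fun A hA => ?_
  have hAS := mem_powerset.1 (mem_filter.1 hA).1
  exact mul_nonneg (prod_nonneg fun i hi => (hp i (hAS hi)).1)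
    (prod_nonneg fun j hj => sub_nonneg.2 (hp j (mem_sdiff.1 hj).1).2)

theorem pbinOn_insert {i : Fin n} (hi : i ∉ S) (k : ℤ) :
    pbinOn n (insert i S) p k = p i * pbinOn n S p (k - 1) + (1 - p i) * pbinOn n S p k := by
  simp only [pbinOn, sum_filter, sum_powerset_insert hi, mul_sum]
  rw [add_comm]
  congr 1 <;> refine sum_congr rfl fun A hA => ?_
  · have hiA : i ∉ A := fun h => hi (mem_powerset.1 hA h)
    rw [insert_sdiff_insert, sdiff_insert_of_notMem hi, prod_insert hiA, card_insert_of_notMem hiA]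
    simp only [Nat.cast_add, Nat.cast_one, eq_sub_iff_add_eq]
    split_ifs <;> ring
  · have hiA : i ∉ A := fun h => hi (mem_powerset.1 hA h)
    rw [insert_sdiff_of_notMem _ hiA, prod_insert fun h => hi (mem_sdiff.1 h).1]
    split_ifs <;> ring

theorem pbinOn_pos (hp : ∀ i ∈ S, p i ∈ Set.Ioo 0 1) {k : ℤ} (hk0 : 0 ≤ k)
    (hk : k ≤ S.card) : 0 < pbinOn n S p k := by
  induction S using Finset.induction_on generalizing k with
  | empty =>
    obtain rfl : k = 0 := by simp at hk; omega
    simp [pbinOn, filter_singleton]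
  | @insert a s ha ih =>
    have hp' : ∀ i ∈ s, p i ∈ Set.Ioo 0 1 := fun i hi => hp i (mem_insert_of_mem hi)
    obtain ⟨hpa0, hpa1⟩ := hp a (mem_insert_self a s)
    rw [card_insert_of_notMem ha, Nat.cast_succ] at hk
    have hs := pbinOn_nonneg (fun i hi => Set.Ioo_subset_Icc_self (hp' i hi))
    rw [pbinOn_insert ha]
    rcases le_or_gt k s.card with hks | hks
    · nlinarith [hs (k - 1), ih hp' hk0 hks]
    · nlinarith [hs k, ih hp' (k := k - 1) (by omega) (by omega)]

theorem pbinOn_mul_lt_sq (hp : ∀ i ∈ S, p i ∈ Set.Ioo 0 1) {k : ℤ} (hk0 : 0 ≤ k)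
    (hk : k + 2 ≤ S.card) : pbinOn n S p k * pbinOn n S p (k + 2) < pbinOn n S p (k + 1) ^ 2 := by
  induction S using Finset.induction_on generalizing k with
  | empty => simp at hk; omega
  | @insert a s ha ih =>
    have hp' : ∀ i ∈ s, p i ∈ Set.Ioo 0 1 := fun i hi => hp i (mem_insert_of_mem hi)
    rw [card_insert_of_notMem ha, Nat.cast_succ] at hk
    have hs := pbinOn_nonneg (fun i hi => Set.Ioo_subset_Icc_self (hp' i hi))
    have hlc : ∀ j, pbinOn n s p j * pbinOn n s p (j + 2) ≤ pbinOn n s p (j + 1) ^ 2 := by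
      intro j
      by_cases hj : 0 ≤ j ∧ j + 2 ≤ s.card
      · exact (ih hp' hj.1 hj.2).le
      · rcases not_and_or.1 hj with hj | hj
        · rw [pbinOn_eq_zero p (Or.inl (not_le.1 hj)), zero_mul]; positivity
        · rw [pbinOn_eq_zero p (k := j + 2) (Or.inr (by omega)), mul_zero]; positivity
    have hstrict : pbinOn n s p (k - 1) * pbinOn n s p (k + 1) < pbinOn n s p k ^ 2 := by
      rcases hk0.eq_or_lt with rfl | hk0'
      · rw [pbinOn_eq_zero p (Or.inl (by norm_num)), zero_mul]
        exact pow_pos (pbinOn_pos hp' le_rfl (by omega)) 2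
      · have := ih hp' (k := k - 1) (by omega) (by omega)
        rwa [show k - 1 + 2 = k + 1 by ring, sub_add_cancel] at this
    simp only [pbinOn_insert ha, show k + 1 - 1 = k by ring, show k + 2 - 1 = k + 1 by ring]
    exact mix_mul_lt_sq (hp a (mem_insert_self a s)) hs hlc (pbinOn_pos hp' hk0 (by omega))
      (pbinOn_pos hp' (by omega) (by omega)) hstrict

theorem secondDiff_log_pbinOn_neg (hp : ∀ i ∈ S, p i ∈ Set.Ioo 0 1) {k : ℤ} (hk0 : 0 ≤ k)
    (hk : k + 2 ≤ S.card) : secondDiff (fun j => Real.log (pbinOn n S p j)) (k + 2) < 0 := by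
  have h0 := pbinOn_pos hp hk0 (by omega)
  have h2 := pbinOn_pos hp (by omega) hk
  have h := Real.log_lt_log (mul_pos h0 h2) (pbinOn_mul_lt_sq hp hk0 hk)
  rw [Real.log_mul h0.ne' h2.ne', Real.log_pow, Nat.cast_ofNat] at h
  simp only [secondDiff, add_sub_cancel_right, show k + 2 - 1 = k + 1 by ring]
  linarith

theorem pbinOn_update_update {l m : Fin n} (hlm : l ≠ m) (hl : l ∈ S) (hm : m ∈ S) (x y : ℝ)
    (k : ℤ) :
    pbinOn n S (update (update p l x) m y) k
      = pbinOn n ((S.erase l).erase m) p k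
        + (pbinOn n ((S.erase l).erase m) p (k - 1) - pbinOn n ((S.erase l).erase m) p k) * (x + y)
        + secondDiff (pbinOn n ((S.erase l).erase m) p) k * (x * y) := by
  set T := (S.erase l).erase m
  have hmT : m ∉ T := notMem_erase m _
  have hlT : l ∉ insert m T := by simp [T, hlm]
  have hS : S = insert l (insert m T) := by
    rw [insert_erase (mem_erase.2 ⟨hlm.symm, hm⟩), insert_erase hl]
  have hT : ∀ i ∈ T, update (update p l x) m y i = p i := fun i hi => by
    obtain ⟨him, hil, -⟩ : i ≠ m ∧ i ≠ l ∧ i ∈ S := by simpa [T] using hi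
    rw [update_of_ne him, update_of_ne hil]
  rw [hS, pbinOn_insert hlT, pbinOn_insert hmT, pbinOn_insert hmT]
  simp only [pbinOn_congr hT, update_self, update_of_ne hlm, secondDiff,
    show k - 1 - 1 = k - 2 by ring]
  ring

end PoissonBinomial

noncomputable def diagDeriv (g : ℝ → ℝ → ℝ) (x y : ℝ) : ℝ := deriv (g · y) x - deriv (g x ·) y

theorem diagDeriv_eq_of_hasDerivAt {g : ℝ → ℝ → ℝ} {x y a b : ℝ}
    (ha : HasDerivAt (g · y) a x) (hb : HasDerivAt (g x ·) b y) : diagDeriv g x y = a - b := by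
  rw [diagDeriv, ha.deriv, hb.deriv]

theorem diagDeriv_congr {g h : ℝ → ℝ → ℝ} {U : Set ℝ} (hU : IsOpen U)
    (hgh : ∀ x ∈ U, ∀ y ∈ U, g x y = h x y) {x y : ℝ} (hx : x ∈ U) (hy : y ∈ U) :
    diagDeriv g x y = diagDeriv h x y := by
  have hgx : (g · y) =ᶠ[𝓝 x] (h · y) :=
    Filter.eventually_of_mem (hU.mem_nhds hx) fun x' hx' => hgh x' hx' y hy
  have hgy : (g x ·) =ᶠ[𝓝 y] (h x ·) :=
    Filter.eventually_of_mem (hU.mem_nhds hy) fun y' hy' => hgh x hx y' hy'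
  rw [diagDeriv, diagDeriv, hgx.deriv_eq, hgy.deriv_eq]

theorem hasDerivAt_symmBilinear_left (P Q S y x : ℝ) :
    HasDerivAt (fun x => P + Q * (x + y) + S * (x * y)) (Q + S * y) x := by
  have h : (fun x => P + Q * (x + y) + S * (x * y)) = fun x => x * (Q + S * y) + (P + Q * y) := by
    funext x; ring
  exact h ▸ (hasDerivAt_mul_const _).add_const _

theorem hasDerivAt_symmBilinear_right (P Q S x y : ℝ) :
    HasDerivAt (fun y => P + Q * (x + y) + S * (x * y)) (Q + S * x) y := by
  have h : (fun y => P + Q * (x + y) + S * (x * y)) = fun y => y * (Q + S * x) + (P + Q * x) := by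
    funext y; ring
  exact h ▸ (hasDerivAt_mul_const _).add_const _

theorem diagDeriv_diagDeriv_sum_comp {ι : Type*} {s : Finset ι} {B : ι → ℝ → ℝ → ℝ}
    {P Q S : ι → ℝ} (hB : ∀ i x y, B i x y = P i + Q i * (x + y) + S i * (x * y))
    {φ φ' φ'' : ℝ → ℝ} {U V : Set ℝ} (hU : IsOpen U)
    (hφ : ∀ t ∈ V, HasDerivAt φ (φ' t) t) (hφ' : ∀ t ∈ V, HasDerivAt φ' (φ'' t) t)
    (hBV : ∀ i ∈ s, ∀ x ∈ U, ∀ y ∈ U, B i x y ∈ V) {x y : ℝ} (hx : x ∈ U) (hy : y ∈ U) :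
    diagDeriv (diagDeriv fun x y => ∑ i ∈ s, φ (B i x y)) x y
      = ∑ i ∈ s, (φ'' (B i x y) * (S i * (y - x)) ^ 2 - 2 * S i * φ' (B i x y)) := by
  have hBx : ∀ i x y, HasDerivAt (B i · y) (Q i + S i * y) x := fun i x y => by
    simpa only [hB] using hasDerivAt_symmBilinear_left (P i) (Q i) (S i) y x
  have hBy : ∀ i x y, HasDerivAt (B i x ·) (Q i + S i * x) y := fun i x y => by
    simpa only [hB] using hasDerivAt_symmBilinear_right (P i) (Q i) (S i) x y
  have hfirst : ∀ x ∈ U, ∀ y ∈ U, diagDeriv (fun x y => ∑ i ∈ s, φ (B i x y)) x y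
      = ∑ i ∈ s, φ' (B i x y) * (S i * (y - x)) := fun x hx y hy => by
    rw [diagDeriv_eq_of_hasDerivAt
      (HasDerivAt.fun_sum fun i hi => (hφ _ (hBV i hi x hx y hy)).comp x (hBx i x y))
      (HasDerivAt.fun_sum fun i hi => (hφ _ (hBV i hi x hx y hy)).comp y (hBy i x y)),
      ← sum_sub_distrib]
    exact sum_congr rfl fun i _ => by ring
  rw [diagDeriv_congr hU hfirst hx hy, diagDeriv_eq_of_hasDerivAt
    (HasDerivAt.fun_sum fun i hi => ((hφ' _ (hBV i hi x hx y hy)).comp x (hBx i x y)).mul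
      (((hasDerivAt_id x).const_sub y).const_mul (S i)))
    (HasDerivAt.fun_sum fun i hi => ((hφ' _ (hBV i hi x hx y hy)).comp y (hBy i x y)).mul
      (((hasDerivAt_id y).sub_const x).const_mul (S i))),
    ← sum_sub_distrib]
  exact sum_congr rfl fun i _ => by simp only [comp_apply, id_eq]; ring

theorem Du_update_update {n : ℕ} {l m : Fin n} (hlm : l ≠ m) (f : (Fin n → ℝ) → ℝ)
    (p : Fin n → ℝ) (x y : ℝ) :
    Du n l m f (update (update p l x) m y)
      = diagDeriv (fun x y => f (update (update p l x) m y)) x y := by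
  simp only [Du, pderiv, diagDeriv, update_self, update_of_ne hlm, update_idem,
    update_comm hlm.symm _ _ (update p l x)]

theorem Du_Du_eq_diagDeriv_diagDeriv {n : ℕ} {l m : Fin n} (hlm : l ≠ m)
    (f : (Fin n → ℝ) → ℝ) (p : Fin n → ℝ) :
    Du n l m (Du n l m f) p
      = diagDeriv (diagDeriv fun x y => f (update (update p l x) m y)) (p l) (p m) := by
  conv_lhs => rw [← update_eq_self l p, ← update_eq_self m (update p l (p l))]
  rw [Du_update_update hlm]
  simp only [Du_update_update hlm, update_eq_self]

namespace PoissonBinomial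

theorem pbinEnt_eq_sum_negMulLog (n : ℕ) (p : Fin n → ℝ) :
    pbinEnt n p = ∑ k ∈ range (n + 1), Real.negMulLog (pbinOn n univ p k) / Real.log 2 := by
  rw [pbinEnt, ← sum_neg_distrib]
  exact sum_congr rfl fun k _ => by rw [Real.negMulLog, Real.logb]; ring

theorem Du_Du_pbinEnt {n : ℕ} {p : Fin n → ℝ} (hp : ∀ i, p i ∈ Set.Ioo 0 1) {l m : Fin n}
    (hlm : l ≠ m) :
    Du n l m (Du n l m (pbinEnt n)) p
      = ∑ k ∈ range (n + 1),
          (-(pbinOn n univ p k)⁻¹ / Real.log 2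
              * (secondDiff (pbinOn n ((univ.erase l).erase m) p) k * (p m - p l)) ^ 2
            - 2 * secondDiff (pbinOn n ((univ.erase l).erase m) p) k
              * ((-Real.log (pbinOn n univ p k) - 1) / Real.log 2)) := by
  have hB := pbinOn_update_update (p := p) hlm (mem_univ l) (mem_univ m)
  have hBpos : ∀ k ∈ range (n + 1), ∀ x ∈ Set.Ioo (0 : ℝ) 1, ∀ y ∈ Set.Ioo (0 : ℝ) 1,
      pbinOn n univ (update (update p l x) m y) k ∈ Set.Ioi 0 := by
    intro k hk x hx y hy
    refine pbinOn_pos (fun i _ => ?_) (Nat.cast_nonneg k) ?_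
    · simp only [update_apply]
      split_ifs
      exacts [hy, hx, hp i]
    · rw [card_univ, Fintype.card_fin]; have := mem_range.1 hk; omega
  rw [Du_Du_eq_diagDeriv_diagDeriv hlm]
  simp only [pbinEnt_eq_sum_negMulLog]
  rw [diagDeriv_diagDeriv_sum_comp (s := range (n + 1)) (fun k x y => hB x y k)
    (φ := fun t => Real.negMulLog t / Real.log 2) isOpen_Ioo
    (fun t ht => (Real.hasDerivAt_negMulLog (ne_of_gt ht)).div_const _)
    (fun t ht => ((Real.hasDerivAt_log (ne_of_gt ht)).neg.sub_const 1).div_const _)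
    hBpos (hp l) (hp m), update_eq_self, update_eq_self]

end PoissonBinomial

open PoissonBinomial

/-- Strict negativity of the second directional derivative of the entropy
along `u = e_l − e_m` : `D²_u H(Z_p) < 0` on the open cube. -/
theorem second_directional_deriv_entropy_neg (n : ℕ) (hn : 2 ≤ n) (p : Fin n → ℝ)
    (hp : ∀ i, 0 < p i ∧ p i < 1) (l m : Fin n) (hlm : l ≠ m) :
    Du n l m (fun q => Du n l m (fun r => pbinEnt n r) q) p < 0 := by
  obtain ⟨N, rfl⟩ := Nat.exists_eq_add_of_le' hn
  have hT : (((univ.erase l).erase m).card : ℤ) = N := by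
    rw [card_erase_of_mem (mem_erase.2 ⟨hlm.symm, mem_univ m⟩), card_erase_of_mem (mem_univ l),
      card_univ, Fintype.card_fin]
    omega
  rw [Du_Du_pbinEnt hp hlm, sum_sub_distrib, sub_neg]
  refine lt_of_le_of_lt (sum_nonpos fun k _ => mul_nonpos_of_nonpos_of_nonneg ?_ (sq_nonneg _)) ?_
  · exact div_nonpos_of_nonpos_of_nonneg (neg_nonpos.2 (inv_nonneg.2
      (pbinOn_nonneg (fun i _ => Set.Ioo_subset_Icc_self (hp i)) _))) (Real.log_nonneg one_le_two)
  simp only [mul_assoc, ← mul_sum]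
  refine mul_pos two_pos (sum_range_secondDiff_mul_pos (N := N)
    (f := fun k => (-Real.log (pbinOn (N + 2) univ p k) - 1) / Real.log 2)
    (fun j hj => pbinOn_eq_zero p (by rwa [hT]))
    (fun j hj => pbinOn_pos (fun i _ => hp i) (Nat.cast_nonneg j) (by rw [hT]; exact_mod_cast hj))
    fun j hj => ?_)
  have hlc := secondDiff_log_pbinOn_neg (S := univ) (fun i _ => hp i) (Nat.cast_nonneg j)
    (by rw [card_univ, Fintype.card_fin]; omega)
  have hL := Real.log_pos one_lt_two
  simp only [secondDiff] at hlc ⊢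
  field_simp
  linarith
end
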